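/- arXiv:1903.03200 — 3 statements merged into one kernel-verified Lean document; each statement's English description precedes it below -/
import Mathlib

section
/- The sequence 16^(5^k) converges in ℤ_10 as k → ∞, and its limit e is a nontrivial idempotent of ℤ_10; similarly 5^(2^k) converges to the idempotent 1 − e. -/
/-!
Under `ℤ_10 ≅ ℤ_2 × ℤ_5` the idempotent is `e = (0, 1)`: modulo `10 ^ i` it is the unique class
`u` with `2 ^ i ∣ u` and `5 ^ i ∣ u - 1`. Lifting the exponent gives `5 ^ (k + 1) ∣ 16 ^ 5 ^ k - 1`
and `2 ^ (k + 1) ∣ 5 ^ 2 ^ k - 1`, while trivially `2 ^ k ∣ 16 ^ 5 ^ k` and `5 ^ k ∣ 5 ^ 2 ^ k`.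
So for `k ≥ i` both `16 ^ 5 ^ k` and `1 - 5 ^ 2 ^ k` reduce to that class modulo `10 ^ i`; a
sequence whose coordinates stabilise converges, because `ℤ_10` is closed in `Π i, ZMod (10 ^ i)`.
-/

/-- The inverse limit `lim← ℤ/n^iℤ`, realized as the subring of compatible
sequences in `Π i, ZMod (n^i)`. -/
def adicSubring (n : ℕ) : Subring (∀ i : ℕ, ZMod (n ^ i)) where
  carrier := { f | ∀ i, ZMod.castHom (pow_dvd_pow n (Nat.le_succ i)) (ZMod (n ^ i)) (f (i + 1)) = f i }
  zero_mem' := by intro i; rw [Pi.zero_apply, map_zero]; rfl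
  one_mem' := by intro i; rw [Pi.one_apply, map_one]; rfl
  add_mem' := by intro a b ha hb i; simp [Pi.add_apply, map_add, ha i, hb i]
  mul_mem' := by intro a b ha hb i; simp [Pi.mul_apply, map_mul, ha i, hb i]
  neg_mem' := by intro a ha i; simp [Pi.neg_apply, map_neg, ha i]

/-- The ring of `n`-adic integers `ℤ_n := lim← ℤ/n^iℤ`. -/
abbrev AdicInt (n : ℕ) : Type := adicSubring n

open Filter

instance (m : ℕ) : TopologicalSpace (ZMod m) := ⊥

instance (m : ℕ) : DiscreteTopology (ZMod m) := ⟨rfl⟩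

open Topology

namespace AdicInt

variable {n : ℕ}

def coord (i : ℕ) : AdicInt n →+* ZMod (n ^ i) :=
  (Pi.evalRingHom (fun i => ZMod (n ^ i)) i).comp (adicSubring n).subtype

theorem ext {x y : AdicInt n} (h : ∀ i, coord i x = coord i y) : x = y :=
  Subtype.ext (funext h)

theorem isClosed_adicSubring : IsClosed (adicSubring n : Set (∀ i, ZMod (n ^ i))) := by
  show IsClosed {f : ∀ i, ZMod (n ^ i) | ∀ i, _ = f i}
  simp only [Set.ofPred_forall]
  exact isClosed_iInter fun i =>
    isClosed_eq (continuous_of_discreteTopology.comp (continuous_apply (i + 1))) (continuous_apply i)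

theorem tendsto_pi_iff {ι : Type*} {l : Filter ι} {f : ι → ∀ i, ZMod (n ^ i)}
    {c : ∀ i, ZMod (n ^ i)} : Tendsto f l (𝓝 c) ↔ ∀ i, ∀ᶠ k in l, f k i = c i := by
  simp only [tendsto_pi_nhds, nhds_discrete, tendsto_pure]

theorem tendsto_nhds_iff {ι : Type*} {l : Filter ι} {x : ι → AdicInt n} {a : AdicInt n} :
    Tendsto x l (𝓝 a) ↔ ∀ i, ∀ᶠ k in l, coord i (x k) = coord i a := by
  rw [tendsto_subtype_rng, tendsto_pi_iff]
  rfl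

theorem exists_tendsto_of_eventually_coord_eq {ι : Type*} {l : Filter ι} [l.NeBot]
    {x : ι → AdicInt n} {c : ∀ i, ZMod (n ^ i)} (h : ∀ i, ∀ᶠ k in l, coord i (x k) = c i) :
    ∃ a : AdicInt n, (∀ i, coord i a = c i) ∧ Tendsto x l (𝓝 a) := by
  have hc : Tendsto (fun k => (x k : ∀ i, ZMod (n ^ i))) l (𝓝 c) := tendsto_pi_iff.2 h
  have hmem : c ∈ adicSubring n :=
    isClosed_adicSubring.mem_of_tendsto hc (Eventually.of_forall fun k => (x k).2)
  exact ⟨⟨c, hmem⟩, fun _ => rfl, tendsto_subtype_rng.2 hc⟩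

end AdicInt

theorem IsCoprime.mul_dvd_sub_of_dvd_of_dvd_sub_one {a b u v : ℤ} (hab : IsCoprime a b)
    (hu : a ∣ u) (hv : a ∣ v) (hu' : b ∣ u - 1) (hv' : b ∣ v - 1) : a * b ∣ u - v :=
  hab.mul_dvd (dvd_sub hu hv) (by simpa using dvd_sub hu' hv')

def IsTenAdicIdempotentApprox (i : ℕ) (u : ℤ) : Prop :=
  (2 : ℤ) ^ i ∣ u ∧ (5 : ℤ) ^ i ∣ u - 1

namespace IsTenAdicIdempotentApprox

variable {i : ℕ} {u v : ℤ}

theorem intCast_eq (hu : IsTenAdicIdempotentApprox i u) (hv : IsTenAdicIdempotentApprox i v) :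
    (u : ZMod (10 ^ i)) = v := by
  have hcop : IsCoprime ((2 : ℤ) ^ i) ((5 : ℤ) ^ i) :=
    (Int.isCoprime_iff_gcd_eq_one.2 (by norm_num)).pow
  rw [ZMod.intCast_eq_intCast_iff_dvd_sub, ← dvd_neg, neg_sub]
  have := hcop.mul_dvd_sub_of_dvd_of_dvd_sub_one hu.1 hv.1 hu.2 hv.2
  rwa [← mul_pow] at this

theorem mul_self (hu : IsTenAdicIdempotentApprox i u) : IsTenAdicIdempotentApprox i (u * u) :=
  ⟨hu.1.mul_right u, by
    rw [show u * u - 1 = (u - 1) * (u + 1) by ring]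
    exact hu.2.mul_right _⟩

end IsTenAdicIdempotentApprox

theorem isTenAdicIdempotentApprox_sixteen_pow {i k : ℕ} (hik : i ≤ k) :
    IsTenAdicIdempotentApprox i (16 ^ 5 ^ k) := by
  constructor
  · rw [show (16 : ℤ) ^ 5 ^ k = 2 ^ (4 * 5 ^ k) by rw [pow_mul]; norm_num]
    have : k < 5 ^ k := Nat.lt_pow_self (by norm_num)
    exact pow_dvd_pow 2 (by omega)
  · have h : (5 : ℤ) ^ (k + 1) ∣ 16 ^ 5 ^ k - 1 := by
      simpa using dvd_sub_pow_of_dvd_sub (p := 5) (a := (16 : ℤ)) (b := 1) (by norm_num) k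
    exact (pow_dvd_pow 5 (by omega)).trans h

theorem isTenAdicIdempotentApprox_one_sub_five_pow {i k : ℕ} (hik : i ≤ k) :
    IsTenAdicIdempotentApprox i (1 - 5 ^ 2 ^ k) := by
  constructor
  · have h : (2 : ℤ) ^ (k + 1) ∣ 5 ^ 2 ^ k - 1 := by
      simpa using dvd_sub_pow_of_dvd_sub (p := 2) (a := (5 : ℤ)) (b := 1) (by norm_num) k
    rw [← dvd_neg, neg_sub]
    exact (pow_dvd_pow 2 (by omega)).trans h
  · rw [sub_sub_cancel_left, dvd_neg]
    exact pow_dvd_pow 5 (hik.trans Nat.lt_two_pow_self.le)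

theorem zmod_sixteen_pow_five_pow_eq {i k : ℕ} (hik : i ≤ k) :
    (16 : ZMod (10 ^ i)) ^ 5 ^ k = 16 ^ 5 ^ i := by
  exact_mod_cast (isTenAdicIdempotentApprox_sixteen_pow hik).intCast_eq
    (isTenAdicIdempotentApprox_sixteen_pow le_rfl)

theorem zmod_five_pow_two_pow_eq {i k : ℕ} (hik : i ≤ k) :
    (5 : ZMod (10 ^ i)) ^ 2 ^ k = 1 - 16 ^ 5 ^ i := by
  have h := (isTenAdicIdempotentApprox_one_sub_five_pow hik).intCast_eq
    (isTenAdicIdempotentApprox_sixteen_pow le_rfl)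
  push_cast at h
  rw [← h, sub_sub_cancel]

theorem isIdempotentElem_zmod_sixteen_pow_five_pow (i : ℕ) :
    IsIdempotentElem ((16 : ZMod (10 ^ i)) ^ 5 ^ i) := by
  rw [IsIdempotentElem]
  exact_mod_cast (isTenAdicIdempotentApprox_sixteen_pow le_rfl).mul_self.intCast_eq
    (isTenAdicIdempotentApprox_sixteen_pow (i := i) le_rfl)

/-- `16^(5^k)` converges in `ℤ_10` to a nontrivial idempotent `e`, and
`5^(2^k)` converges to the complementary idempotent `1 - e`. -/
theorem adicInt_ten_idempotent_limits :
    ∃ e : AdicInt 10,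
      Tendsto (fun k : ℕ => (16 : AdicInt 10) ^ 5 ^ k) atTop (nhds e) ∧
      e * e = e ∧ e ≠ 0 ∧ e ≠ 1 ∧
      Tendsto (fun k : ℕ => (5 : AdicInt 10) ^ 2 ^ k) atTop (nhds (1 - e)) := by
  have h16 (i : ℕ) : ∀ᶠ k in atTop,
      AdicInt.coord i ((16 : AdicInt 10) ^ 5 ^ k) = (16 : ZMod (10 ^ i)) ^ 5 ^ i := by
    filter_upwards [eventually_ge_atTop i] with k hk
    rw [map_pow, map_ofNat, zmod_sixteen_pow_five_pow_eq hk]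
  obtain ⟨e, he, hlim⟩ := AdicInt.exists_tendsto_of_eventually_coord_eq h16
  refine ⟨e, hlim, AdicInt.ext fun i => ?_, fun h => ?_, fun h => ?_, ?_⟩
  · rw [map_mul, he]
    exact isIdempotentElem_zmod_sixteen_pow_five_pow i
  · have h1 := he 1
    rw [h, map_zero] at h1
    revert h1
    decide
  · have h1 := he 1
    rw [h, map_one] at h1
    revert h1
    decide
  · rw [AdicInt.tendsto_nhds_iff]
    intro i
    filter_upwards [eventually_ge_atTop i] with k hk
    rw [map_pow, map_ofNat, map_sub, map_one, he, zmod_five_pow_two_pow_eq hk]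
end

section
/- Define a_0 = 3 and a_{i+1} = 3^{x_i} where x_i ≡ a_i (mod 10^i) with 0 ≤ x_i < 10^i. Then the sequence (x_i) converges in ℤ_10 to a limit x satisfying x = 3^x (i.e., x is a fixed point of 10-adic exponentiation with base 3). -/
open Filter

/-- If `b ≡ 1 (mod n)` with `10 ∣ n`, then `b ^ 10 ≡ 1 (mod 10n)`. -/
lemma aux_pow_ten {b n : ℕ} (h10 : 10 ∣ n) (hb : b ≡ 1 [MOD n]) :
    b ^ 10 ≡ 1 [MOD 10 * n] := by
  have h1 : (b : ℤ) ≡ 1 [ZMOD (n : ℤ)] := by exact_mod_cast Int.natCast_modEq_iff.mpr hb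
  have hd : (n : ℤ) ∣ (b : ℤ) - 1 := Int.ModEq.dvd h1.symm
  have hb10 : b ≡ 1 [MOD 10] := hb.of_dvd h10
  have hs : (10 : ℤ) ∣ ∑ i ∈ Finset.range 10, (b : ℤ) ^ i := by
    have : ((10 : ℕ) : ℤ) ∣ ∑ i ∈ Finset.range 10, (b : ℤ) ^ i := by
      rw [← ZMod.intCast_zmod_eq_zero_iff_dvd]
      have hcast : (b : ZMod 10) = ((1 : ℕ) : ZMod 10) :=
        (ZMod.natCast_eq_natCast_iff _ _ _).mpr hb10
      push_cast
      rw [hcast]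
      decide
    exact_mod_cast this
  have hprod : ((10 : ℤ) * n) ∣ (b : ℤ) ^ 10 - 1 := by
    rw [← geom_sum_mul]
    exact mul_dvd_mul hs hd
  have hz : (1 : ℤ) ≡ (b : ℤ) ^ 10 [ZMOD ((10 : ℤ) * n)] := Int.modEq_iff_dvd.mpr hprod
  exact Int.natCast_modEq_iff.mp (by exact_mod_cast hz.symm)

/-- `3 ^ (4·10^k) ≡ 1 (mod 4·10^(k+1))`. -/
lemma aux_order : ∀ k : ℕ, 3 ^ (4 * 10 ^ k) ≡ 1 [MOD 4 * 10 ^ (k + 1)]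
  | 0 => by decide
  | (k + 1) => by
    have ih := aux_order k
    have h10 : 10 ∣ 4 * 10 ^ (k + 1) := ⟨4 * 10 ^ k, by ring⟩
    have h := aux_pow_ten h10 ih
    have e1 : ((3 : ℕ) ^ (4 * 10 ^ k)) ^ 10 = 3 ^ (4 * 10 ^ (k + 1)) := by
      rw [← pow_mul]; congr 1; ring
    have e2 : 10 * (4 * 10 ^ (k + 1)) = 4 * 10 ^ (k + 2) := by ring
    rw [e1, e2] at h
    exact h

/-- Auxiliary: if `v ≤ u` and `u ≡ v (mod 4·10^k)` then `3^u ≡ 3^v (mod 4·10^(k+1))`. -/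
lemma aux_step' {u v k : ℕ} (hle : v ≤ u) (h : u ≡ v [MOD 4 * 10 ^ k]) :
    3 ^ u ≡ 3 ^ v [MOD 4 * 10 ^ (k + 1)] := by
  obtain ⟨t, ht⟩ := (Nat.modEq_iff_dvd' hle).mp h.symm
  have hu : u = v + (4 * 10 ^ k) * t := by omega
  subst hu
  have e : (3 : ℕ) ^ (v + 4 * 10 ^ k * t) = 3 ^ v * (3 ^ (4 * 10 ^ k)) ^ t := by
    rw [pow_add, pow_mul]
  rw [e]
  calc 3 ^ v * (3 ^ (4 * 10 ^ k)) ^ t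
      ≡ 3 ^ v * 1 ^ t [MOD 4 * 10 ^ (k + 1)] :=
        Nat.ModEq.mul_left _ ((aux_order k).pow t)
    _ = 3 ^ v := by ring

lemma aux_step {u v k : ℕ} (h : u ≡ v [MOD 4 * 10 ^ k]) :
    3 ^ u ≡ 3 ^ v [MOD 4 * 10 ^ (k + 1)] := by
  rcases le_total v u with hle | hle
  · exact aux_step' hle h
  · exact (aux_step' hle h.symm).symm

/-- The main chain of congruences. -/
lemma aux_chain (a : ℕ → ℕ) (h0 : a 0 = 3)
    (hrec : ∀ i, a (i + 1) = 3 ^ (a i % 10 ^ i)) :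
    ∀ i : ℕ, a (i + 3) ≡ a (i + 2) [MOD 4 * 10 ^ i]
  | 0 => by
    have h1 : a 1 = 1 := by rw [hrec 0, h0]; norm_num
    have h2 : a 2 = 3 := by rw [hrec 1, h1]; norm_num
    have h3 : a 3 = 27 := by rw [hrec 2, h2]; norm_num
    rw [h2, h3]
    decide
  | (i + 1) => by
    have ih := aux_chain a h0 hrec i
    have d3 : 4 * 10 ^ i ∣ 10 ^ (i + 3) := ⟨250, by ring⟩
    have d2 : 4 * 10 ^ i ∣ 10 ^ (i + 2) := ⟨25, by ring⟩
    have hx : a (i + 3) % 10 ^ (i + 3) ≡ a (i + 2) % 10 ^ (i + 2) [MOD 4 * 10 ^ i] :=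
      (((Nat.mod_modEq _ _).of_dvd d3).trans ih).trans ((Nat.mod_modEq _ _).of_dvd d2).symm
    have h := aux_step hx
    rw [← hrec, ← hrec] at h
    exact h

/-- Stabilization: `a i ≡ a (j+2) (mod 10^j)` for all `i ≥ j+2`. -/
lemma aux_stab (a : ℕ → ℕ) (h0 : a 0 = 3)
    (hrec : ∀ i, a (i + 1) = 3 ^ (a i % 10 ^ i)) (j : ℕ) :
    ∀ m : ℕ, a (j + 2 + m) ≡ a (j + 2) [MOD 10 ^ j]
  | 0 => Nat.ModEq.refl _
  | (m + 1) => by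
    have ih := aux_stab a h0 hrec j m
    have hc : a (j + m + 3) ≡ a (j + m + 2) [MOD 4 * 10 ^ (j + m)] := aux_chain a h0 hrec (j + m)
    have hdvd : (10 : ℕ) ^ j ∣ 4 * 10 ^ (j + m) := ⟨4 * 10 ^ m, by ring⟩
    have hc' : a (j + 2 + (m + 1)) ≡ a (j + 2 + m) [MOD 10 ^ j] := by
      have := hc.of_dvd hdvd
      have e1 : j + m + 3 = j + 2 + (m + 1) := by omega
      have e2 : j + m + 2 = j + 2 + m := by omega
      rwa [e1, e2] at this
    exact hc'.trans ih

/-- With `a 0 = 3`, `x i = a i mod 10^i`, `a (i+1) = 3 ^ x i`, the truncations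
`x i` converge in `ℤ_10` to a limit `x` which is a fixed point of
exponentiation with base `3`: the powers `3 ^ x i` converge to `x` as well,
i.e. `x = 3 ^ x` in the `10`-adic sense. -/
theorem ten_adic_fixed_point_three_pow
    (a : ℕ → ℕ) (h0 : a 0 = 3)
    (hrec : ∀ i, a (i + 1) = 3 ^ (a i % 10 ^ i)) :
    ∃ x : AdicInt 10,
      Tendsto (fun i => ((a i % 10 ^ i : ℕ) : AdicInt 10)) atTop (nhds x) ∧
      Tendsto (fun i => ((3 ^ (a i % 10 ^ i) : ℕ) : AdicInt 10)) atTop (nhds x) := by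
  have coordEq : ∀ (n j : ℕ),
      (((n : ℕ) : AdicInt 10) : ∀ i, ZMod (10 ^ i)) j = ((n : ℕ) : ZMod (10 ^ j)) := by
    intro n j
    have h1 : (((n : ℕ) : AdicInt 10) : ∀ i, ZMod (10 ^ i)) = ((n : ℕ) : ∀ i, ZMod (10 ^ i)) :=
      map_natCast ((adicSubring 10).subtype) n
    rw [h1]
    rfl
  have hmem : (fun j => ((a (j + 2) : ℕ) : ZMod (10 ^ j))) ∈ adicSubring 10 := by
    intro j
    show (ZMod.castHom _ (ZMod (10 ^ j))) ((a (j + 3) : ZMod (10 ^ (j + 1)))) = _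
    rw [map_natCast]
    exact (ZMod.natCast_eq_natCast_iff _ _ _).mpr (aux_stab a h0 hrec j 1)
  refine ⟨⟨_, hmem⟩, ?_, ?_⟩
  · rw [tendsto_subtype_rng, tendsto_pi_nhds]
    intro j
    apply tendsto_const_nhds.congr'
    filter_upwards [eventually_ge_atTop (j + 2)] with i hi
    rw [coordEq, ZMod.natCast_eq_natCast_iff]
    obtain ⟨m, rfl⟩ := Nat.exists_eq_add_of_le hi
    calc a (j + 2) ≡ a (j + 2 + m) [MOD 10 ^ j] := (aux_stab a h0 hrec j m).symm
      _ ≡ a (j + 2 + m) % 10 ^ (j + 2 + m) [MOD 10 ^ j] :=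
        ((Nat.mod_modEq _ _).of_dvd (pow_dvd_pow 10 (by omega))).symm
  · rw [tendsto_subtype_rng, tendsto_pi_nhds]
    intro j
    apply tendsto_const_nhds.congr'
    filter_upwards [eventually_ge_atTop (j + 1)] with i hi
    rw [← hrec i, coordEq, ZMod.natCast_eq_natCast_iff]
    obtain ⟨m, rfl⟩ := Nat.exists_eq_add_of_le hi
    have e : j + 1 + m + 1 = j + 2 + m := by omega
    rw [e]
    exact (aux_stab a h0 hrec j m).symm
end

section
/- For any prime p and any integer k ≥ 2 coprime to p, the tower sequence t_0 = k, t_{j+1} = k^{t_j} converges in ℤ_p; if instead p divides k, the sequence converges to 0 in ℤ_p. -/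
/-!
A tower `t (j + 1) = k ^ t j` with `k ≥ 2` is eventually constant modulo every `m ≠ 0`.
Write `m = a * b` with `a ∣ k ^ m` and `b` coprime to `k`. Once the exponents exceed `m`, every
`k ^ t j` is divisible by `k ^ m`, and modulo `b` it only depends on `t j` modulo `φ b`, by
Euler's theorem. Since `φ b < m`, strong induction on `m` applies. Taking `m = p ^ n` makes the
tower Cauchy in `ℤ_p`; when `p ∣ k` we even have `p ^ j ∣ t (j + 1)`.
-/

open Filter Topology
open scoped Nat

theorem Nat.exists_mul_eq_dvd_pow_coprime (k : ℕ) {m : ℕ} (hm : m ≠ 0) :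
    ∃ a b, a * b = m ∧ a ∣ k ^ m ∧ k.Coprime b := by
  rcases eq_or_ne k 0 with rfl | hk
  · exact ⟨m, 1, mul_one m, by simp [hm], coprime_one_right 0⟩
  set a := m.gcd (k ^ m)
  have ha : a ∣ m := gcd_dvd_left m (k ^ m)
  refine ⟨a, m / a, Nat.mul_div_cancel' ha, gcd_dvd_right m (k ^ m), coprime_of_dvd ?_⟩
  intro q hq hqk hqb
  have hb : m / a ≠ 0 := Nat.div_ne_zero_iff_of_dvd ha |>.2 ⟨hm, ne_zero_of_dvd_ne_zero hm ha⟩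
  -- `q` occurs in `k ^ m` with multiplicity at least `m`, hence in `a` as often as in `m`.
  have hqa : a.factorization q = m.factorization q := by
    have hkq : 1 ≤ k.factorization q := hq.factorization_pos_of_dvd hk hqk
    have hmq : m.factorization q < m := factorization_lt q hm
    rw [factorization_gcd hm (pow_ne_zero m hk), Finsupp.inf_apply, factorization_pow,
      Finsupp.smul_apply, smul_eq_mul]
    exact min_eq_left (by nlinarith)
  have hbq : (m / a).factorization q = 0 := by
    rw [factorization_div ha, Finsupp.tsub_apply, hqa, Nat.sub_self]
  exact absurd ((hq.dvd_iff_one_le_factorization hb).1 hqb) (by omega)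

theorem Nat.pow_modEq_pow_of_modEq_totient {k b x y : ℕ} (hkb : k.Coprime b)
    (hxy : x ≡ y [MOD φ b]) : k ^ x ≡ k ^ y [MOD b] := by
  rcases lt_or_ge 1 b with hb | hb
  · unfold Nat.ModEq at hxy ⊢
    rw [Nat.pow_totient_mod hb hkb, hxy, ← Nat.pow_totient_mod hb hkb]
  · interval_cases b
    · simpa [Nat.modEq_zero_iff] using congrArg (k ^ ·) hxy
    · exact Nat.modEq_one

theorem Nat.pow_modEq_pow_of_dvd_pow {k a b e x y : ℕ} (ha : a ∣ k ^ e) (hkb : k.Coprime b)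
    (hx : e ≤ x) (hy : e ≤ y) (hxy : x ≡ y [MOD φ b]) : k ^ x ≡ k ^ y [MOD a * b] := by
  obtain ⟨x, rfl⟩ := Nat.exists_eq_add_of_le hx
  obtain ⟨y, rfl⟩ := Nat.exists_eq_add_of_le hy
  rw [pow_add, pow_add]
  have hb : k ^ x ≡ k ^ y [MOD b] :=
    Nat.pow_modEq_pow_of_modEq_totient hkb (Nat.ModEq.add_left_cancel' e hxy)
  exact (hb.mul_left' (k ^ e)).of_dvd (Nat.mul_dvd_mul_right ha b)

section Tower

variable {k : ℕ} {t : ℕ → ℕ}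

theorem le_tower (hk : 2 ≤ k) (ht : ∀ j, t (j + 1) = k ^ t j) (j : ℕ) : j ≤ t j := by
  induction j with
  | zero => exact Nat.zero_le _
  | succ j ih => rw [ht]; exact (Nat.lt_pow_self hk).trans_le' ih

theorem pow_dvd_tower_succ (hk : 2 ≤ k) (ht : ∀ j, t (j + 1) = k ^ t j) {d : ℕ} (hd : d ∣ k)
    (j : ℕ) : d ^ j ∣ t (j + 1) := by
  rw [ht]
  exact (pow_dvd_pow d (le_tower hk ht j)).trans (pow_dvd_pow_of_dvd hd _)

theorem tower_eventually_modEq (hk : 2 ≤ k) (ht : ∀ j, t (j + 1) = k ^ t j) {m : ℕ}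
    (hm : m ≠ 0) : ∃ N, ∀ n ≥ N, t n ≡ t N [MOD m] := by
  induction m using Nat.strong_induction_on with
  | _ m ih =>
  obtain rfl | hm1 : m = 1 ∨ 1 < m := by omega
  · exact ⟨0, fun _ _ => Nat.modEq_one⟩
  obtain ⟨a, b, rfl, ha, hkb⟩ := Nat.exists_mul_eq_dvd_pow_coprime k hm
  have hb : b ≠ 0 := right_ne_zero_of_mul hm
  have hφ : φ b < a * b := by
    obtain rfl | hb1 : b = 1 ∨ 1 < b := by omega
    · simpa using hm1
    · exact (Nat.totient_lt b hb1).trans_le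
        (Nat.le_mul_of_pos_left b (Nat.pos_of_ne_zero (left_ne_zero_of_mul hm)))
  obtain ⟨N, hN⟩ := ih (φ b) hφ (Nat.totient_pos.2 (Nat.pos_of_ne_zero hb)).ne'
  set M := N + a * b
  refine ⟨M + 1, fun n hn => ?_⟩
  obtain ⟨n, rfl⟩ : ∃ n', n = n' + 1 := ⟨n - 1, by omega⟩
  rw [ht, ht]
  have hexp : t n ≡ t M [MOD φ b] := (hN n (by omega)).trans (hN M (by omega)).symm
  exact Nat.pow_modEq_pow_of_dvd_pow ha hkb ((le_tower hk ht n).trans' (by omega))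
    ((le_tower hk ht M).trans' (by omega)) hexp

end Tower

namespace PadicInt

variable {p : ℕ} [Fact p.Prime]

theorem norm_natCast_sub_le_of_modEq {x y n : ℕ} (h : x ≡ y [MOD p ^ n]) :
    ‖(x : ℤ_[p]) - y‖ ≤ (p : ℝ) ^ (-(n : ℤ)) := by
  have hdvd : (p : ℤ) ^ n ∣ (x : ℤ) - y := by exact_mod_cast Nat.modEq_iff_dvd.1 h.symm
  have := norm_int_le_pow_iff_dvd.2 hdvd
  rwa [Int.cast_sub, Int.cast_natCast, Int.cast_natCast] at this

theorem cauchySeq_natCast_of_modEq (u : ℕ → ℕ) (h : ∀ n, ∃ N, ∀ i ≥ N, u i ≡ u N [MOD p ^ n]) :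
    CauchySeq fun i => (u i : ℤ_[p]) := by
  refine Metric.cauchySeq_iff'.2 fun ε hε => ?_
  obtain ⟨n, hn⟩ := exists_pow_neg_lt p hε
  obtain ⟨N, hN⟩ := h n
  exact ⟨N, fun i hi => (dist_eq_norm _ _).trans_lt
    ((norm_natCast_sub_le_of_modEq (hN i hi)).trans_lt hn)⟩

theorem tendsto_natCast_zero_of_pow_dvd (u : ℕ → ℕ)
    (h : ∀ n, ∀ᶠ i in atTop, p ^ n ∣ u i) : Tendsto (fun i => (u i : ℤ_[p])) atTop (𝓝 0) := by
  refine Metric.tendsto_nhds.2 fun ε hε => ?_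
  obtain ⟨n, hn⟩ := exists_pow_neg_lt p hε
  filter_upwards [h n] with i hi
  have := norm_natCast_sub_le_of_modEq (Nat.modEq_zero_iff_dvd.2 hi)
  rw [Nat.cast_zero, sub_zero] at this
  exact (dist_zero_right _).trans_lt (this.trans_lt hn)

end PadicInt

theorem padic_tetration_converges_general (p : ℕ) [Fact p.Prime] (k : ℕ) (hk : 2 ≤ k)
    (t : ℕ → ℕ) (htrec : ∀ j, t (j + 1) = k ^ t j) :
    (Nat.Coprime k p →
      ∃ x : ℤ_[p], Tendsto (fun j => ((t j : ℤ_[p]))) atTop (nhds x)) ∧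
    (p ∣ k → Tendsto (fun j => ((t j : ℤ_[p]))) atTop (nhds 0)) := by
  refine ⟨fun _ => cauchySeq_tendsto_of_complete ?_, fun hpk => ?_⟩
  · exact PadicInt.cauchySeq_natCast_of_modEq t fun n =>
      tower_eventually_modEq hk htrec (pow_ne_zero n (Fact.out : p.Prime).ne_zero)
  · rw [← tendsto_add_atTop_iff_nat 1]
    exact PadicInt.tendsto_natCast_zero_of_pow_dvd _ fun n =>
      (eventually_ge_atTop n).mono fun j hj =>
        (pow_dvd_pow p hj).trans (pow_dvd_tower_succ hk htrec hpk j)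

/-- The power tower `t 0 = k`, `t (j+1) = k ^ t j` converges in `ℤ_p` when
`gcd(k, p) = 1`, and converges to `0` when `p ∣ k`. -/
theorem padic_tetration_converges (p : ℕ) [Fact p.Prime] (k : ℕ) (hk : 2 ≤ k)
    (t : ℕ → ℕ) (ht0 : t 0 = k) (htrec : ∀ j, t (j + 1) = k ^ t j) :
    (Nat.Coprime k p →
      ∃ x : ℤ_[p], Tendsto (fun j => ((t j : ℤ_[p]))) atTop (nhds x)) ∧
    (p ∣ k → Tendsto (fun j => ((t j : ℤ_[p]))) atTop (nhds 0)) :=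
  padic_tetration_converges_general p k hk t htrec
end
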